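/- Let I be a small category, E a category, and F: E → Cat a (pseudo)functor such that: (1) E has limits of shape I; (2) for each object e ∈ E, the category F(e) has limits of shape I; (3) for each morphism f: e → e' in E, the functor F(f): F(e) → F(e') has a right adjoint. Then the Grothendieck construction ∫F has limits of shape I. -/

import Mathlib

open CategoryTheory CategoryTheory.Limits TopologicalSpace

attribute [local instance] CategoryTheory.ConcreteCategory.instFunLike

universe w' w v u v₂ u₂ v₁ u₁

namespace ProfiniteCosheaves

variable {C : Type u₂} [Category.{v₂} C]

/-- The canonical binary cofan `A(U) → A(U ⊔ V) ← A(V)` of a precosheaf `A` at a pair of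
clopen subsets. -/
def cosheafCofan {X : Type*} [TopologicalSpace X] (A : Clopens X ⥤ C) (U V : Clopens X) :
    BinaryCofan (A.obj U) (A.obj V) :=
  BinaryCofan.mk (A.map (homOfLE le_sup_left : U ⟶ U ⊔ V)) (A.map (homOfLE le_sup_right))

/-- A precosheaf (a functor on the poset of clopen subsets) is a cosheaf if its value at `∅`
is initial and, for disjoint clopens `U, V`, the canonical cofan exhibits `A(U ⊔ V)` as the
coproduct `A(U) ⨿ A(V)`. -/
structure IsCosheaf {X : Type*} [TopologicalSpace X] (A : Clopens X ⥤ C) : Prop where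
  initial : Nonempty (IsInitial (A.obj ⊥))
  binary : ∀ U V : Clopens X, Disjoint U V → Nonempty (IsColimit (cosheafCofan A U V))

/-- The category `CoSh(X, C)` of cosheaves over a profinite space `X` valued in `C`. -/
def CoSheaf (X : Profinite.{u}) (C : Type u₂) [Category.{v₂} C] :=
  ObjectProperty.FullSubcategory (fun A : Clopens X ⥤ C => IsCosheaf A)

instance (X : Profinite.{u}) : Category (CoSheaf X C) := ObjectProperty.FullSubcategory.category _

/-- Preimage of clopen subsets along a continuous map, as a functor. -/
def clopensComap {X Y : Profinite.{u}} (f : X ⟶ Y) : Clopens Y ⥤ Clopens X where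
  obj U := ⟨f ⁻¹' (U : Set Y), U.isClopen.preimage f.hom.hom.continuous⟩
  map {U V} h := homOfLE (fun x hx => leOfHom h hx)

theorem IsCosheaf.comap {X Y : Profinite.{u}} (f : X ⟶ Y) {A : Clopens X ⥤ C}
    (hA : IsCosheaf A) : IsCosheaf (clopensComap f ⋙ A) := by
  constructor
  · have e : (clopensComap f).obj ⊥ = ⊥ := by
      apply SetLike.ext'
      simp [clopensComap]
    exact ⟨hA.initial.some.ofIso (A.mapIso (eqToIso e.symm))⟩
  · intro U V hUV
    have hUV' : Disjoint ((clopensComap f).obj U) ((clopensComap f).obj V) := by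
      rw [disjoint_iff] at hUV ⊢
      have h0 : (U : Set (Y : Type u)) ∩ (V : Set (Y : Type u)) = ∅ := by
        have := congrArg (fun W : Clopens (Y : Type u) => (W : Set (Y : Type u))) hUV
        simpa using this
      apply SetLike.ext'
      exact Set.preimage_inter.symm.trans ((congrArg _ h0).trans Set.preimage_empty)
    obtain ⟨h⟩ := hA.binary _ _ hUV'
    have e : (clopensComap f).obj U ⊔ (clopensComap f).obj V = (clopensComap f).obj (U ⊔ V) := by
      apply SetLike.ext'
      exact Set.preimage_union.symm
    refine ⟨h.ofIsoColimit (Cocones.ext (A.mapIso (eqToIso e)) ?_)⟩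
    rintro ⟨⟨⟩⟩ <;>
      · dsimp [cosheafCofan]
        exact (A.map_comp _ _).symm

/-- The direct image functor `f_* : CoSh(X, C) ⥤ CoSh(Y, C)`, `A ↦ A ∘ f⁻¹`. -/
def coshMapFun {X Y : Profinite.{u}} (f : X ⟶ Y) : CoSheaf X C ⥤ CoSheaf Y C :=
  ObjectProperty.lift _
    (ObjectProperty.ι _ ⋙ (Functor.whiskeringLeft (Clopens Y) (Clopens X) C).obj (clopensComap f))
    (fun A => A.property.comap f)

/-- The functor `Profinite ⥤ Cat` sending `X` to the category of cosheaves on `X` valued in `C`,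
and a continuous map to the direct image functor. -/
def coshFunctor (C : Type u₂) [Category.{v₂} C] : Profinite.{u} ⥤ Cat where
  obj X := Cat.of (CoSheaf X C)
  map f := (coshMapFun f).toCatHom
  map_id _ := rfl
  map_comp f g := by
    apply Cat.Hom.ext
    rfl

/-- The total category `CoSh(C)` of profinite cosheaves valued in `C`, i.e. the Grothendieck
construction of `X ↦ CoSh(X, C)`. Objects are pairs `(X, A)` with `A` a cosheaf on `X`;
a morphism `(X, A) ⟶ (Y, B)` is a pair `(f, φ)` with `f : X ⟶ Y` continuous and
`φ : A ∘ f⁻¹ ⟶ B`. -/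
def CoSh (C : Type u₂) [Category.{v₂} C] :=
  Grothendieck (coshFunctor.{u} C)

instance : Category (CoSh.{u} C) := inferInstanceAs (Category (Grothendieck _))

/-- The global cosections functor `CoSh(C) ⥤ C`, `(A, X) ↦ A(X)`. -/
def globalCosections (C : Type u₂) [Category.{v₂} C] : CoSh.{u} C ⥤ C where
  obj P := (P.fiber : CoSheaf P.base C).obj.obj ⊤
  map {P Q} g :=
    (P.fiber : CoSheaf P.base C).obj.map (homOfLE (fun x _ => Set.mem_univ _) : (⊤ : Clopens P.base) ⟶ _) ≫
      NatTrans.app (InducedCategory.Hom.hom g.fiber) ⊤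
  map_id := by
    intro P
    erw [CategoryTheory.Functor.map_id]
    exact Category.id_comp _
  map_comp := by
    intro P Q R f g
    erw [CategoryTheory.Functor.map_id]
    erw [CategoryTheory.Functor.map_id]
    refine (Category.id_comp _).trans ?_
    refine Eq.trans ?_ (congrArg₂ (· ≫ ·) (Category.id_comp _).symm (Category.id_comp _).symm)
    show (Grothendieck.comp f g).fiber.hom.app ⊤ = _
    exact Category.id_comp (f.fiber.hom.app ⊤ ≫ g.fiber.hom.app ⊤)

/-- The poset of clopen neighbourhoods of a point, as a category. -/
def Nbhds (X : Profinite.{u}) (x : X) := ObjectProperty.FullSubcategory (fun U : Clopens X => x ∈ U)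

instance (X : Profinite.{u}) (x : X) : Category (Nbhds X x) := ObjectProperty.FullSubcategory.category _

/-- The diagram of values of `A` on the clopen neighbourhoods of `x`; the costalk of `A` at `x`
is its (inverse) limit. -/
def costalkDiagram {X : Profinite.{u}} (A : Clopens X ⥤ C) (x : X) : Nbhds X x ⥤ C :=
  ObjectProperty.ι _ ⋙ A

/-- The costalk `A_x = lim_{V ∋ x} A(V)` of a precosheaf at a point. -/
noncomputable def costalk {X : Profinite.{u}} (A : Clopens X ⥤ C) (x : X)
    [HasLimit (costalkDiagram A x)] : C :=
  limit (costalkDiagram A x)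

/-- `c` is *a* costalk of `A` at `x` if the costalk diagram of `A` at `x` admits a limit cone
whose point is isomorphic to `c`. -/
def IsCostalk {X : Profinite.{u}} (A : Clopens X ⥤ C) (x : X) (c : C) : Prop :=
  ∃ t : Cone (costalkDiagram A x), Nonempty (IsLimit t) ∧ Nonempty (t.pt ≅ c)

/-- The pro-completion of a category: the free completion under cofiltered limits, realised
concretely as the opposite of the category of left-exact functors to `Type`. -/
def ProCompletion (E : Type u₁) [Category.{v₁} E] :=
  (ObjectProperty.FullSubcategory fun F : E ⥤ Type v₁ => Nonempty (PreservesFiniteLimits F))ᵒᵖ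

instance (E : Type u₁) [Category.{v₁} E] : Category (ProCompletion E) :=
  inferInstanceAs (Category (ObjectProperty.FullSubcategory _)ᵒᵖ)

/-- The canonical (co-Yoneda) embedding of a category into its pro-completion. -/
def proEmbedding (E : Type u₁) [Category.{v₁} E] : E ⥤ ProCompletion E where
  obj e := Opposite.op ⟨coyoneda.obj (Opposite.op e), ⟨inferInstance⟩⟩
  map {e e'} f := Quiver.Hom.op
    (show (⟨coyoneda.obj (Opposite.op e'), ⟨inferInstance⟩⟩ : ObjectProperty.FullSubcategory _) ⟶
        ⟨coyoneda.obj (Opposite.op e), ⟨inferInstance⟩⟩ from ObjectProperty.homMk (coyoneda.map f.op))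

/-- A regular category: it has finite limits, coequalisers of kernel pairs, and regular
epimorphisms are stable under pullback. -/
class IsRegularCategory (C : Type u₂) [Category.{v₂} C] : Prop where
  hasFiniteLimits : HasFiniteLimits C
  hasCoeqOfKernelPairs : ∀ {R X Y : C} (f : X ⟶ Y) (a b : R ⟶ X),
    IsPullback a b f f → HasCoequalizer a b
  regularEpi_stable : ∀ {P X Y Z : C} (f : X ⟶ Z) (g : Y ⟶ Z) (p₁ : P ⟶ X) (p₂ : P ⟶ Y),
    IsPullback p₁ p₂ f g → Nonempty (RegularEpi f) → Nonempty (RegularEpi p₂)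

/-- `D` is closed under subobjects in its pro-completion: any subobject (in `Pro(D)`) of an
object of `D` is isomorphic to an object of `D`. -/
def ClosedUnderSubobjects (D : Type u) [SmallCategory D] : Prop :=
  ∀ (d : D) (c : ProCompletion D) (m : c ⟶ (proEmbedding D).obj d), Mono m →
    ∃ d' : D, Nonempty (c ≅ (proEmbedding D).obj d')

/-- The coprojection maps into binary coproducts are monomorphisms. -/
def MonoCoprojections (C : Type u₂) [Category.{v₂} C] : Prop :=
  ∀ (a b p : C) (inl : a ⟶ p) (inr : b ⟶ p),
    Nonempty (IsColimit (BinaryCofan.mk inl inr)) → Mono inl ∧ Mono inr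

/-- Cofiltered limits commute with finite colimits in `C`: for every finite category `J`,
the colimit functor `(J ⥤ C) ⥤ C` preserves cofiltered limits (of shapes of size `w`). -/
def CofilteredLimitsCommuteWithFiniteColimits (C : Type u₂) [Category.{v₂} C]
    [HasFiniteColimits C] : Prop :=
  ∀ (J : Type) [SmallCategory J] [FinCategory J] (K : Type w) [SmallCategory K] [IsCofiltered K],
    PreservesLimitsOfShape K (colim (J := J) (C := C))

/-- The full subcategory of "finite objects" of `CoSh(Pro(D))`: cosheaves `(A, X)` with `X`
finite such that every costalk of `A` lies in (the image of) `D`. -/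
def CoShFinProp (D : Type u) [SmallCategory D] (P : CoSh.{u} (ProCompletion D)) : Prop :=
  Finite (P.base : Type u) ∧
    ∀ x : P.base, ∃ d : D, IsCostalk (P.fiber : CoSheaf P.base (ProCompletion D)).obj x ((proEmbedding D).obj d)

/-- The category `CoSh(Pro(D))_fin` of finite cosheaf objects. -/
def CoShFin (D : Type u) [SmallCategory D] := ObjectProperty.FullSubcategory (CoShFinProp D)

instance (D : Type u) [SmallCategory D] : Category (CoShFin D) := ObjectProperty.FullSubcategory.category _

end ProfiniteCosheaves

/-
Write the diagram as `i ↦ ⟨bᵢ, xᵢ⟩`, let `L` be the limit of `i ↦ bᵢ`, with legs `πᵢ`, and let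
`Rᵢ` be right adjoint to `F(πᵢ)`. The counit `F(πᵢ)(Rᵢ xᵢ) ⟶ xᵢ` makes `⟨L, Rᵢ xᵢ⟩ ⟶ ⟨bᵢ, xᵢ⟩`
a cartesian morphism over `πᵢ`: every morphism into `⟨bᵢ, xᵢ⟩` lying over `v ≫ πᵢ` factors
uniquely through it by a morphism over `v`. By this uniqueness the transition maps of the diagram
descend to maps `Rᵢ xᵢ ⟶ Rⱼ xⱼ` in the fibre `F(L)`, and `⟨L, lim Rᵢ xᵢ⟩` is the limit in `∫ F`:
a morphism `⟨e, a⟩ ⟶ ⟨L, z⟩` over `v` is just a morphism `F(v) a ⟶ z`, so the universal property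
of the fibrewise limit holds over every base morphism `v`, not only over identities.
-/

namespace CategoryTheory.Grothendieck

variable {E : Type u₁} [Category.{v₁} E] {F : E ⥤ Cat.{v₂, u₂}}

lemma map_id_obj {c : E} (a : F.obj c) : (F.map (𝟙 c)).toFunctor.obj a = a :=
  Functor.congr_obj congr($(F.map_id c).toFunctor) a

lemma map_id_map {c : E} {a b : F.obj c} (φ : a ⟶ b) :
    (F.map (𝟙 c)).toFunctor.map φ =
      eqToHom (map_id_obj a) ≫ φ ≫ eqToHom (map_id_obj b).symm := by
  rw [Functor.congr_hom congr($(F.map_id c).toFunctor) φ]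
  rfl

/-- `(ι F c).map φ`, typed with source and target the pairs `⟨c, a⟩`, `⟨c, b⟩` rather than
`(ι F c).obj _`, so that rewriting never has to unfold `ι`. -/
def fiberMap {c : E} {a b : F.obj c} (φ : a ⟶ b) : (⟨c, a⟩ : Grothendieck F) ⟶ ⟨c, b⟩ :=
  (ι F c).map φ

lemma fiberMap_injective {c : E} {a b : F.obj c} :
    Function.Injective (fiberMap (F := F) (a := a) (b := b)) :=
  (ι F c).map_injective

lemma fiberMap_id {c : E} (a : F.obj c) : fiberMap (𝟙 a) = 𝟙 (⟨c, a⟩ : Grothendieck F) :=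
  (ι F c).map_id a

lemma fiberMap_comp {c : E} {a b d : F.obj c} (φ : a ⟶ b) (ψ : b ⟶ d) :
    fiberMap (φ ≫ ψ) = (fiberMap φ ≫ fiberMap ψ : (⟨c, a⟩ : Grothendieck F) ⟶ ⟨c, d⟩) :=
  (ι F c).map_comp φ ψ

lemma comp_fiberMap {X : Grothendieck F} {c : E} {a b : F.obj c} (k : X ⟶ ⟨c, a⟩)
    (φ : a ⟶ b) : k ≫ fiberMap φ = ⟨k.base, k.fiber ≫ φ⟩ := by
  fapply Grothendieck.ext
  · exact Category.comp_id _
  · simp only [fiberMap, ι, comp_fiber, map_id_map, Category.assoc]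
    erw [eqToHom_trans_assoc, eqToHom_trans_assoc, eqToHom_refl, Category.id_comp,
      eqToHom_trans_assoc, eqToHom_refl, Category.id_comp]

lemma comp_eq_of_mk_comp_fiberMap_eq {X : Grothendieck F} {c : E} {a b : F.obj c}
    {v : X.base ⟶ c} {ψ : (F.map v).toFunctor.obj X.fiber ⟶ a} {φ : a ⟶ b}
    {ψ' : (F.map v).toFunctor.obj X.fiber ⟶ b}
    (h : (⟨v, ψ⟩ : X ⟶ ⟨c, a⟩) ≫ fiberMap φ = ⟨v, ψ'⟩) : ψ ≫ φ = ψ' := by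
  rw [comp_fiberMap] at h
  exact eq_of_heq (Hom.mk.inj h).2

lemma fiberMap_eqToHom_comp {c : E} {a b : F.obj c} (k : (⟨c, a⟩ : Grothendieck F) ⟶ ⟨c, b⟩)
    (hk : k.base = 𝟙 c) (h : a = (F.map k.base).toFunctor.obj a) :
    fiberMap (eqToHom h ≫ k.fiber) = k := by
  fapply Grothendieck.ext
  · exact hk.symm
  · simp only [fiberMap, ι]
    erw [eqToHom_trans_assoc, eqToHom_trans_assoc, eqToHom_refl, Category.id_comp]

lemma hom_ext_of_isLimit {J : Type*} [Category J] {c : E} {D : J ⥤ F.obj c} {t : Cone D}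
    (ht : IsLimit t) {X : Grothendieck F} {m m' : X ⟶ ⟨c, t.pt⟩} (hbase : m.base = m'.base)
    (h : ∀ j, m ≫ fiberMap (t.π.app j) = m' ≫ fiberMap (t.π.app j)) : m = m' := by
  rcases m with ⟨b, φ⟩
  rcases m' with ⟨b', φ'⟩
  obtain rfl : b = b' := hbase
  simp only [comp_fiberMap] at h
  have hφ : φ = φ' := ht.hom_ext fun j => by simpa using Grothendieck.congr (h j)
  rw [hφ]

section CartesianLift

variable {e : E} {Y : Grothendieck F} {u : e ⟶ Y.base} {R : F.obj Y.base ⥤ F.obj e}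
  (adj : (F.map u).toFunctor ⊣ R)

def cartesianLift : (⟨e, R.obj Y.fiber⟩ : Grothendieck F) ⟶ Y :=
  ⟨u, adj.counit.app Y.fiber⟩

def factorThruCartesianLift {X : Grothendieck F} (g : X ⟶ Y) (v : X.base ⟶ e)
    (hv : v ≫ u = g.base) :
    X ⟶ ⟨e, R.obj Y.fiber⟩ :=
  ⟨v, adj.homEquiv _ _ (eqToHom (by rw [← hv, F.map_comp]; rfl) ≫ g.fiber)⟩

lemma factorThruCartesianLift_comp {X : Grothendieck F} (g : X ⟶ Y) (v : X.base ⟶ e)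
    (hv : v ≫ u = g.base) : factorThruCartesianLift adj g v hv ≫ cartesianLift adj = g := by
  fapply Grothendieck.ext
  · exact hv
  · simp only [factorThruCartesianLift, cartesianLift, comp_fiber]
    rw [← Adjunction.homEquiv_counit, Equiv.symm_apply_apply]
    erw [eqToHom_trans_assoc, eqToHom_trans_assoc, eqToHom_refl, Category.id_comp]

lemma cartesianLift_hom_ext {X : Grothendieck F} {k k' : X ⟶ ⟨e, R.obj Y.fiber⟩}
    (hbase : k.base = k'.base) (h : k ≫ cartesianLift adj = k' ≫ cartesianLift adj) :
    k = k' := by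
  rcases k with ⟨b, φ⟩
  rcases k' with ⟨b', φ'⟩
  obtain rfl : b = b' := hbase
  have := Grothendieck.congr h
  simp only [cartesianLift, comp_fiber] at this
  erw [eqToHom_trans_assoc, cancel_epi, ← Adjunction.homEquiv_counit,
    ← Adjunction.homEquiv_counit] at this
  rw [(adj.homEquiv _ _).symm.injective this]

end CartesianLift

section Limit

variable {I : Type w} [SmallCategory I] {G : I ⥤ Grothendieck F}

/-- `c.π.app i`, typed with target `(G.obj i).base` rather than `(G ⋙ forget F).obj i`. -/
def baseLeg (c : Cone (G ⋙ forget F)) (i : I) : c.pt ⟶ (G.obj i).base :=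
  c.π.app i

variable (G) {c : Cone (G ⋙ forget F)} {R : ∀ i, F.obj (G.obj i).base ⥤ F.obj c.pt}
  (adj : ∀ i, (F.map (baseLeg c i)).toFunctor ⊣ R i)

def fiberDiagramMap {i j : I} (f : i ⟶ j) :
    (R i).obj (G.obj i).fiber ⟶ (R j).obj (G.obj j).fiber :=
  eqToHom (map_id_obj _).symm ≫
    (factorThruCartesianLift (adj j) (cartesianLift (adj i) ≫ G.map f) (𝟙 c.pt)
      ((Category.id_comp _).trans (c.w f).symm)).fiber

lemma fiberMap_fiberDiagramMap_comp {i j : I} (f : i ⟶ j) :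
    fiberMap (fiberDiagramMap G adj f) ≫ cartesianLift (adj j) =
      cartesianLift (adj i) ≫ G.map f := by
  have hlift := fiberMap_eqToHom_comp
    (factorThruCartesianLift (adj j) (cartesianLift (adj i) ≫ G.map f) (𝟙 c.pt)
      ((Category.id_comp _).trans (c.w f).symm)) rfl
    (map_id_obj _).symm
  exact (congrArg (· ≫ cartesianLift (adj j)) hlift).trans (factorThruCartesianLift_comp _ _ _ _)

abbrev fiberDiagram : I ⥤ F.obj c.pt where
  obj i := (R i).obj (G.obj i).fiber
  map f := fiberDiagramMap G adj f
  map_id i := fiberMap_injective <| cartesianLift_hom_ext (adj i) rfl <| by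
    rw [fiberMap_fiberDiagramMap_comp, G.map_id, Category.comp_id, fiberMap_id, Category.id_comp]
  map_comp f g := fiberMap_injective <| cartesianLift_hom_ext (adj _) rfl <| by
    rw [fiberMap_fiberDiagramMap_comp, fiberMap_comp, Category.assoc,
      fiberMap_fiberDiagramMap_comp, ← Category.assoc, fiberMap_fiberDiagramMap_comp,
      Category.assoc, G.map_comp]

variable {G} {X : Grothendieck F} (g : ∀ i, X ⟶ G.obj i)
  (hg : ∀ ⦃i j⦄ (f : i ⟶ j), g i ≫ G.map f = g j) (v : X.base ⟶ c.pt)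
  (hv : ∀ i, v ≫ baseLeg c i = (g i).base)

lemma factorThruCartesianLift_comp_fiberMap {i j : I} (f : i ⟶ j)
    (hf : g i ≫ G.map f = g j) :
    factorThruCartesianLift (adj i) (g i) v (hv i) ≫ fiberMap (fiberDiagramMap G adj f) =
      factorThruCartesianLift (adj j) (g j) v (hv j) := by
  refine cartesianLift_hom_ext (adj j) (Category.comp_id v) ?_
  rw [Category.assoc, fiberMap_fiberDiagramMap_comp, ← Category.assoc,
    factorThruCartesianLift_comp, factorThruCartesianLift_comp, hf]

noncomputable abbrev liftFiberCone : Cone (fiberDiagram G adj) where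
  pt := (F.map v).toFunctor.obj X.fiber
  π.app i := (factorThruCartesianLift (adj i) (g i) v (hv i)).fiber
  π.naturality _ _ f := (Category.id_comp _).trans <| Eq.symm <|
    comp_eq_of_mk_comp_fiberMap_eq (factorThruCartesianLift_comp_fiberMap adj g v hv f (hg f))

variable [HasLimit (fiberDiagram G adj)]

noncomputable def limitLift : X ⟶ ⟨c.pt, limit (fiberDiagram G adj)⟩ :=
  ⟨v, limit.lift (fiberDiagram G adj) (liftFiberCone adj g hg v hv)⟩

lemma limitLift_comp_fiberMap (i : I) :
    limitLift adj g hg v hv ≫ fiberMap (limit.π (fiberDiagram G adj) i) =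
      factorThruCartesianLift (adj i) (g i) v (hv i) := by
  refine (comp_fiberMap _ _).trans ?_
  show (⟨v, limit.lift _ (liftFiberCone adj g hg v hv) ≫ limit.π _ i⟩ : X ⟶ ⟨c.pt, _⟩) =
    ⟨v, (liftFiberCone adj g hg v hv).π.app i⟩
  rw [limit.lift_π]

lemma limitLift_comp_limitCone_π (i : I) :
    limitLift adj g hg v hv ≫ fiberMap (limit.π (fiberDiagram G adj) i) ≫ cartesianLift (adj i) =
      g i := by
  rw [← Category.assoc, limitLift_comp_fiberMap, factorThruCartesianLift_comp]

lemma eq_limitLift (m : X ⟶ ⟨c.pt, limit (fiberDiagram G adj)⟩) (hbase : m.base = v)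
    (hm : ∀ i, m ≫ fiberMap (limit.π (fiberDiagram G adj) i) ≫ cartesianLift (adj i) = g i) :
    m = limitLift adj g hg v hv :=
  hom_ext_of_isLimit (limit.isLimit _) hbase fun i =>
    cartesianLift_hom_ext (adj i) (congrArg (· ≫ 𝟙 c.pt) hbase) (by
      rw [Category.assoc, Category.assoc]
      exact (hm i).trans (limitLift_comp_limitCone_π adj g hg v hv i).symm)

variable (G)

noncomputable def limitCone : Cone G where
  pt := ⟨c.pt, limit (fiberDiagram G adj)⟩
  π.app i := fiberMap (limit.π (fiberDiagram G adj) i) ≫ cartesianLift (adj i)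
  π.naturality i j f := by
    dsimp
    rw [Category.id_comp, Category.assoc, ← fiberMap_fiberDiagramMap_comp, ← Category.assoc,
      ← fiberMap_comp]
    exact congrArg (fiberMap · ≫ _) (limit.w (fiberDiagram G adj) f).symm

noncomputable def isLimitLimitCone (hc : IsLimit c) : IsLimit (limitCone G adj) where
  lift s :=
    limitLift adj (s.π.app ·) (fun _ _ f => s.w f) (hc.lift ((forget F).mapCone s)) (hc.fac _)
  fac _ := limitLift_comp_limitCone_π adj _ _ _ _
  uniq s m hm := eq_limitLift adj _ _ _ _ m
    (hc.uniq ((forget F).mapCone s) m.base fun i =>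
      (congrArg (m.base ≫ ·) (Category.id_comp (baseLeg c i))).symm.trans
        (congrArg Hom.base (hm i))) hm

end Limit

end CategoryTheory.Grothendieck

namespace ProfiniteCosheaves

/-- **Statement 11.** Let `I` be a small category, `E` a category and `F : E ⥤ Cat` a functor
such that `E` has `I`-limits, each fibre `F(e)` has `I`-limits, and each `F(f)` has a right
adjoint. Then the Grothendieck construction `∫ F` has `I`-limits. -/
theorem grothendieck_hasLimitsOfShape {E : Type u₁} [Category.{v₁} E] (I : Type w)
    [SmallCategory I] (F : E ⥤ Cat.{v₂, u₂}) [HasLimitsOfShape I E]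
    (h2 : ∀ e : E, HasLimitsOfShape I (F.obj e))
    (h3 : ∀ {e e' : E} (f : e ⟶ e'), ∃ R : ↑(F.obj e') ⥤ ↑(F.obj e),
      Nonempty ((F.map f).toFunctor ⊣ R)) :
    HasLimitsOfShape I (Grothendieck F) := by
  choose R adj using fun (e e' : E) (f : e ⟶ e') => h3 f
  refine ⟨fun G => ?_⟩
  let c := limit.cone (G ⋙ Grothendieck.forget F)
  have := h2 c.pt
  exact HasLimit.mk ⟨_, Grothendieck.isLimitLimitCone G
    (fun i => (adj _ _ (Grothendieck.baseLeg c i)).some) (limit.isLimit _)⟩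

end ProfiniteCosheaves
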